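/- (Theorem 1, Golub–Hoffman–Stewart.) Let A = (A₁ A₂) ∈ ℝ^{m×n} with A₁ ∈ ℝ^{m×k}, A₂ ∈ ℝ^{m×(n−k)}, rank(A₁) = k, and let r be an integer with k ≤ r. Let P_{A₁} denote the orthogonal projection onto the column space of A₁ and P⊥_{A₁} the orthogonal projection onto its orthogonal complement. Define B̃₂ := P_{A₁}(A₂) + H_{r−k}(P⊥_{A₁}(A₂)). Then the block matrix (A₁ B̃₂) satisfies rank(A₁ B̃₂) ≤ r, and for every B₂ ∈ ℝ^{m×(n−k)} such that rank(A₁ B₂) ≤ r one has ‖A₂ − B̃₂‖_F ≤ ‖A₂ − B₂‖_F; i.e., B̃₂ solves the constrained low-rank approximation problem min_{B=(B₁ B₂), B₁=A₁, rank(B)≤r} ‖A − B‖_F². -/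

import Mathlib

/-!
Let `K` be the column space of `A₁` and `Π` the orthogonal projection onto `Kᗮ`. The column space
of `(A₁ B₂)` contains `K` and, orthogonally to it, the columns of `Π B₂`; so `rank (A₁ B₂) ≤ r`
forces `rank (Π B₂) ≤ r - k`. As `‖A₂ - B₂‖_F ≥ ‖Π (A₂ - B₂)‖_F = ‖D - Pᵀ (Π B₂) Q‖_F`, it remains
to prove the Eckart–Young bound `‖D - C‖_F² ≥ ∑_{i ≥ s} dᵢ²` for `rank C ≤ s`, which `B̃₂` attains.
For it, multiply by the projection `R` onto the orthogonal complement of the column space of `C`: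
`‖D - C‖_F² ≥ ‖R D‖_F² = ∑ᵢ dᵢ² Rᵢᵢ`, where the weights `Rᵢᵢ ∈ [0, 1]` add up to
`m - rank C ≥ m - s`; such weights capture at least the `m - s` smallest of the `dᵢ²`.
-/

open Matrix

/-- Frobenius norm of a real matrix. -/
noncomputable def frobNorm {m n : ℕ} (A : Matrix (Fin m) (Fin n) ℝ) : ℝ :=
  Real.sqrt (∑ i, ∑ j, (A i j) ^ 2)

/-- Column space of a matrix, as a subspace of Euclidean space. -/
noncomputable def colSpace {m k : ℕ} (A : Matrix (Fin m) (Fin k) ℝ) :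
    Submodule ℝ (EuclideanSpace ℝ (Fin m)) :=
  LinearMap.range (Matrix.toEuclideanLin A)

/-- `P_{A₁}`: orthogonal projection onto the column space of `A₁`, applied columnwise. -/
noncomputable def projCols {m k l : ℕ} (A₁ : Matrix (Fin m) (Fin k) ℝ)
    (B : Matrix (Fin m) (Fin l) ℝ) : Matrix (Fin m) (Fin l) ℝ :=
  Matrix.of fun i j =>
    (Submodule.orthogonalProjectionOnto (colSpace A₁) (WithLp.toLp 2 fun i' => B i' j) : EuclideanSpace ℝ (Fin m)) i

/-- `P⊥_{A₁}`: orthogonal projection onto the orthogonal complement of the column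
space of `A₁`, applied columnwise. -/
noncomputable def projOrthCols {m k l : ℕ} (A₁ : Matrix (Fin m) (Fin k) ℝ)
    (B : Matrix (Fin m) (Fin l) ℝ) : Matrix (Fin m) (Fin l) ℝ :=
  Matrix.of fun i j =>
    (Submodule.orthogonalProjectionOnto (colSpace A₁)ᗮ (WithLp.toLp 2 fun i' => B i' j) : EuclideanSpace ℝ (Fin m)) i


open Module

section FrobeniusNorm

variable {m n : ℕ}

lemma frobNorm_nonneg (A : Matrix (Fin m) (Fin n) ℝ) : 0 ≤ frobNorm A :=
  Real.sqrt_nonneg _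

lemma frobNorm_sq (A : Matrix (Fin m) (Fin n) ℝ) : frobNorm A ^ 2 = ∑ i, ∑ j, A i j ^ 2 :=
  Real.sq_sqrt (by positivity)

lemma trace_mul_transpose_self (A : Matrix (Fin m) (Fin n) ℝ) :
    trace (A * Aᵀ) = ∑ i, ∑ j, A i j ^ 2 := by
  simp [trace, mul_apply, sq]

lemma frobNorm_eq_sqrt_trace (A : Matrix (Fin m) (Fin n) ℝ) :
    frobNorm A = √(trace (A * Aᵀ)) := by
  rw [trace_mul_transpose_self, frobNorm]

lemma frobNorm_sq_eq_trace (A : Matrix (Fin m) (Fin n) ℝ) :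
    frobNorm A ^ 2 = trace (A * Aᵀ) := by
  rw [frobNorm_sq, trace_mul_transpose_self]

lemma frobNorm_orthogonal_mul_mul_transpose {U : Matrix (Fin m) (Fin m) ℝ}
    {V : Matrix (Fin n) (Fin n) ℝ} (hU : U ∈ orthogonalGroup (Fin m) ℝ)
    (hV : V ∈ orthogonalGroup (Fin n) ℝ) (A : Matrix (Fin m) (Fin n) ℝ) :
    frobNorm (U * A * Vᵀ) = frobNorm A := by
  have hUU : Uᵀ * U = 1 := (mem_orthogonalGroup_iff' _ _).1 hU
  have hVV : Vᵀ * V = 1 := (mem_orthogonalGroup_iff' _ _).1 hV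
  have : U * A * Vᵀ * (U * A * Vᵀ)ᵀ = U * (A * Aᵀ) * Uᵀ := by
    simp only [transpose_mul, transpose_transpose, Matrix.mul_assoc]
    rw [← Matrix.mul_assoc Vᵀ V, hVV, Matrix.one_mul]
  rw [frobNorm_eq_sqrt_trace, frobNorm_eq_sqrt_trace, this, trace_mul_cycle, hUU, Matrix.one_mul]

end FrobeniusNorm

lemma orthogonal_mul_mul_transpose_cancel {m n : ℕ} {U : Matrix (Fin m) (Fin m) ℝ}
    {V : Matrix (Fin n) (Fin n) ℝ} (hU : U ∈ orthogonalGroup (Fin m) ℝ)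
    (hV : V ∈ orthogonalGroup (Fin n) ℝ) (X : Matrix (Fin m) (Fin n) ℝ) :
    U * (Uᵀ * X * V) * Vᵀ = X := by
  simp only [← Matrix.mul_assoc, (mem_orthogonalGroup_iff _ _).1 hU, Matrix.one_mul]
  rw [Matrix.mul_assoc, (mem_orthogonalGroup_iff _ _).1 hV, Matrix.mul_one]

lemma rank_mul_mul_le {m n o p R : Type*} [Fintype n] [Fintype o] [Fintype p] [CommRing R]
    [StrongRankCondition R] (U : Matrix m n R) (X : Matrix n o R) (V : Matrix o p R) :
    (U * X * V).rank ≤ X.rank :=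
  (rank_mul_le_left _ _).trans (rank_mul_le_right _ _)

section OrthProjMatrix

variable {n : Type*} [Fintype n] [DecidableEq n] (K : Submodule ℝ (EuclideanSpace ℝ n))

noncomputable def orthProjMatrix : Matrix n n ℝ :=
  (toEuclideanCLM (n := n) (𝕜 := ℝ)).symm K.starProjection

lemma toEuclideanCLM_orthProjMatrix :
    toEuclideanCLM (n := n) (𝕜 := ℝ) (orthProjMatrix K) = K.starProjection :=
  StarAlgEquiv.apply_symm_apply _ _

lemma orthProjMatrix_mul_apply {l : Type*} [Fintype l] (B : Matrix n l ℝ) (i : n) (j : l) :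
    (orthProjMatrix K * B) i j = K.starProjection (WithLp.toLp 2 fun i' => B i' j) i := by
  rw [← toEuclideanCLM_orthProjMatrix]
  rfl

lemma transpose_orthProjMatrix : (orthProjMatrix K)ᵀ = orthProjMatrix K := by
  rw [← conjTranspose_eq_transpose_of_trivial, ← star_eq_conjTranspose]
  apply EquivLike.injective (toEuclideanCLM (n := n) (𝕜 := ℝ))
  rw [map_star, toEuclideanCLM_orthProjMatrix]
  exact (isSelfAdjoint_starProjection K).star_eq

lemma orthProjMatrix_mul_self : orthProjMatrix K * orthProjMatrix K = orthProjMatrix K := by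
  rw [orthProjMatrix, ← map_mul, K.isIdempotentElem_starProjection.eq]

lemma orthProjMatrix_add_orthogonal : orthProjMatrix K + orthProjMatrix Kᗮ = 1 := by
  rw [orthProjMatrix, orthProjMatrix, ← map_add,
    ← map_one (toEuclideanCLM (n := n) (𝕜 := ℝ)).symm]
  congr 1
  ext1 x
  exact K.starProjection_add_starProjection_orthogonal x

lemma trace_orthProjMatrix : trace (orthProjMatrix K) = finrank ℝ K := by
  have hproj : LinearMap.IsProj K (K.starProjection : EuclideanSpace ℝ n →ₗ[ℝ] _) :=
    ⟨K.starProjection_apply_mem, fun x hx => K.starProjection_eq_self_iff.mpr hx⟩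
  rw [← hproj.trace, ← toEuclideanCLM_orthProjMatrix, coe_toEuclideanCLM_eq_toEuclideanLin,
    toEuclideanLin, toLpLin_eq_toLin, Matrix.trace_toLin_eq]

lemma orthProjMatrix_apply_self_mem_Icc (i : n) : orthProjMatrix K i i ∈ Set.Icc 0 1 := by
  have hsq : orthProjMatrix K i i = ∑ j, orthProjMatrix K i j ^ 2 := by
    have h := orthProjMatrix_mul_self K
    conv_lhs at h => enter [2]; rw [← transpose_orthProjMatrix K]
    conv_lhs => rw [← h]
    simp [mul_apply, sq]
  have hnonneg : 0 ≤ orthProjMatrix K i i := hsq ▸ Finset.sum_nonneg fun j _ => sq_nonneg _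
  have hle : orthProjMatrix K i i ^ 2 ≤ orthProjMatrix K i i := by
    conv_rhs => rw [hsq]
    exact Finset.single_le_sum (fun j _ => sq_nonneg (orthProjMatrix K i j)) (Finset.mem_univ i)
  generalize orthProjMatrix K i i = x at hnonneg hle
  exact ⟨hnonneg, by nlinarith⟩

end OrthProjMatrix

section ColumnSpace

variable {m k l : ℕ}

lemma rank_eq_finrank_range_toEuclideanLin {n : Type*} [Fintype n] [DecidableEq n]
    (M : Matrix (Fin m) n ℝ) : M.rank = finrank ℝ (LinearMap.range (toEuclideanLin M)) := by
  rw [rank_eq_finrank_range_toLin M (PiLp.basisFun 2 ℝ (Fin m)) (PiLp.basisFun 2 ℝ n),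
    ← toLpLin_eq_toLin]

lemma finrank_colSpace (A : Matrix (Fin m) (Fin k) ℝ) : finrank ℝ (colSpace A) = A.rank :=
  (rank_eq_finrank_range_toEuclideanLin A).symm

lemma range_toEuclideanLin_fromCols (A : Matrix (Fin m) (Fin k) ℝ)
    (B : Matrix (Fin m) (Fin l) ℝ) :
    LinearMap.range (toEuclideanLin (fromCols A B)) = colSpace A ⊔ colSpace B := by
  apply le_antisymm
  · rintro _ ⟨v, rfl⟩
    have hv : toEuclideanLin (fromCols A B) v =
        toEuclideanLin A (WithLp.toLp 2 (v ∘ Sum.inl)) +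
          toEuclideanLin B (WithLp.toLp 2 (v ∘ Sum.inr)) := by
      simp [toLpLin_apply, fromCols_mulVec]
    rw [hv]
    exact Submodule.add_mem_sup ⟨_, rfl⟩ ⟨_, rfl⟩
  · refine sup_le ?_ ?_
    · rintro _ ⟨v, rfl⟩
      exact ⟨WithLp.toLp 2 (Sum.elim v 0), by simp [toLpLin_apply]⟩
    · rintro _ ⟨v, rfl⟩
      exact ⟨WithLp.toLp 2 (Sum.elim 0 v), by simp [toLpLin_apply]⟩

lemma rank_fromCols (A : Matrix (Fin m) (Fin k) ℝ) (B : Matrix (Fin m) (Fin l) ℝ) :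
    (fromCols A B).rank = finrank ℝ ↥(colSpace A ⊔ colSpace B) := by
  rw [rank_eq_finrank_range_toEuclideanLin, range_toEuclideanLin_fromCols]

lemma colSpace_mul_le {n : ℕ} (M : Matrix (Fin m) (Fin n) ℝ) (N : Matrix (Fin n) (Fin l) ℝ) :
    colSpace (M * N) ≤ colSpace M := by
  rw [colSpace, colSpace, toEuclideanLin, toLpLin_mul 2 2 2]
  exact LinearMap.range_comp_le_range _ _

lemma colSpace_add_le (A B : Matrix (Fin m) (Fin l) ℝ) :
    colSpace (A + B) ≤ colSpace A ⊔ colSpace B := by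
  rw [colSpace, map_add]
  exact LinearMap.range_add_le _ _

lemma colSpace_sub_le (A B : Matrix (Fin m) (Fin l) ℝ) :
    colSpace (A - B) ≤ colSpace A ⊔ colSpace B := by
  rw [sub_eq_add_neg]
  refine (colSpace_add_le A (-B)).trans_eq ?_
  rw [colSpace, colSpace, map_neg, LinearMap.range_neg]
  rfl

lemma colSpace_orthProjMatrix (K : Submodule ℝ (EuclideanSpace ℝ (Fin m))) :
    colSpace (orthProjMatrix K) = K := by
  rw [colSpace, ← coe_toEuclideanCLM_eq_toEuclideanLin, toEuclideanCLM_orthProjMatrix,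
    K.range_starProjection]

end ColumnSpace

section Projections

variable {m k l : ℕ}

lemma frobNorm_sq_orthProjMatrix_mul (K : Submodule ℝ (EuclideanSpace ℝ (Fin m)))
    (A : Matrix (Fin m) (Fin l) ℝ) :
    frobNorm (orthProjMatrix K * A) ^ 2 = trace (orthProjMatrix K * (A * Aᵀ)) := by
  rw [frobNorm_sq_eq_trace, transpose_mul, transpose_orthProjMatrix, ← Matrix.mul_assoc,
    trace_mul_comm, ← Matrix.mul_assoc, ← Matrix.mul_assoc, orthProjMatrix_mul_self,
    Matrix.mul_assoc]

lemma frobNorm_sq_eq_add_orthProjMatrix (K : Submodule ℝ (EuclideanSpace ℝ (Fin m)))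
    (A : Matrix (Fin m) (Fin l) ℝ) :
    frobNorm A ^ 2 =
      frobNorm (orthProjMatrix K * A) ^ 2 + frobNorm (orthProjMatrix Kᗮ * A) ^ 2 := by
  rw [frobNorm_sq_orthProjMatrix_mul, frobNorm_sq_orthProjMatrix_mul, ← trace_add,
    ← Matrix.add_mul, orthProjMatrix_add_orthogonal, Matrix.one_mul, frobNorm_sq_eq_trace]

lemma frobNorm_orthProjMatrix_mul_le (K : Submodule ℝ (EuclideanSpace ℝ (Fin m)))
    (A : Matrix (Fin m) (Fin l) ℝ) : frobNorm (orthProjMatrix K * A) ≤ frobNorm A := by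
  rw [← pow_le_pow_iff_left₀ (frobNorm_nonneg _) (frobNorm_nonneg _) two_ne_zero,
    frobNorm_sq_eq_add_orthProjMatrix K A]
  exact le_add_of_nonneg_right (sq_nonneg _)

lemma projCols_eq_mul (A : Matrix (Fin m) (Fin k) ℝ) (B : Matrix (Fin m) (Fin l) ℝ) :
    projCols A B = orthProjMatrix (colSpace A) * B := by
  ext i j
  rw [orthProjMatrix_mul_apply]
  rfl

lemma projOrthCols_eq_mul (A : Matrix (Fin m) (Fin k) ℝ) (B : Matrix (Fin m) (Fin l) ℝ) :
    projOrthCols A B = orthProjMatrix (colSpace A)ᗮ * B := by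
  ext i j
  rw [orthProjMatrix_mul_apply]
  rfl

lemma projCols_add_projOrthCols (A : Matrix (Fin m) (Fin k) ℝ) (B : Matrix (Fin m) (Fin l) ℝ) :
    projCols A B + projOrthCols A B = B := by
  rw [projCols_eq_mul, projOrthCols_eq_mul, ← Matrix.add_mul, orthProjMatrix_add_orthogonal,
    Matrix.one_mul]

lemma sub_projCols (A : Matrix (Fin m) (Fin k) ℝ) (B : Matrix (Fin m) (Fin l) ℝ) :
    B - projCols A B = projOrthCols A B :=
  (eq_sub_of_add_eq' (projCols_add_projOrthCols A B)).symm

lemma projOrthCols_sub (A : Matrix (Fin m) (Fin k) ℝ) (X Y : Matrix (Fin m) (Fin l) ℝ) :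
    projOrthCols A (X - Y) = projOrthCols A X - projOrthCols A Y := by
  simp only [projOrthCols_eq_mul, Matrix.mul_sub]

lemma frobNorm_projOrthCols_le (A : Matrix (Fin m) (Fin k) ℝ) (B : Matrix (Fin m) (Fin l) ℝ) :
    frobNorm (projOrthCols A B) ≤ frobNorm B :=
  projOrthCols_eq_mul A B ▸ frobNorm_orthProjMatrix_mul_le _ B

lemma colSpace_projCols_le (A : Matrix (Fin m) (Fin k) ℝ) (B : Matrix (Fin m) (Fin l) ℝ) :
    colSpace (projCols A B) ≤ colSpace A :=
  projCols_eq_mul A B ▸ (colSpace_mul_le _ _).trans_eq (colSpace_orthProjMatrix _)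

lemma colSpace_projOrthCols_le (A : Matrix (Fin m) (Fin k) ℝ) (B : Matrix (Fin m) (Fin l) ℝ) :
    colSpace (projOrthCols A B) ≤ (colSpace A)ᗮ :=
  projOrthCols_eq_mul A B ▸ (colSpace_mul_le _ _).trans_eq (colSpace_orthProjMatrix _)

lemma rank_fromCols_projCols_add_le (A : Matrix (Fin m) (Fin k) ℝ)
    (X H : Matrix (Fin m) (Fin l) ℝ) :
    (fromCols A (projCols A X + H)).rank ≤ A.rank + H.rank := by
  rw [rank_fromCols, ← finrank_colSpace, ← finrank_colSpace]
  have hle : colSpace (projCols A X + H) ≤ colSpace A ⊔ colSpace H :=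
    (colSpace_add_le _ _).trans (sup_le_sup_right (colSpace_projCols_le A X) _)
  exact (Submodule.finrank_mono (sup_le le_sup_left hle)).trans
    (Submodule.finrank_add_le_finrank_add_finrank _ _)

lemma rank_add_rank_projOrthCols_le (A : Matrix (Fin m) (Fin k) ℝ)
    (B : Matrix (Fin m) (Fin l) ℝ) :
    A.rank + (projOrthCols A B).rank ≤ (fromCols A B).rank := by
  rw [rank_fromCols, ← finrank_colSpace, ← finrank_colSpace]
  have hdisj : Disjoint (colSpace A) (colSpace (projOrthCols A B)) :=
    (colSpace A).orthogonal_disjoint.mono_right (colSpace_projOrthCols_le A B)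
  have hle : colSpace (projOrthCols A B) ≤ colSpace A ⊔ colSpace B := by
    rw [← sub_projCols, sup_comm]
    exact (colSpace_sub_le _ _).trans (sup_le_sup_left (colSpace_projCols_le A B) _)
  rw [← Submodule.finrank_sup_add_finrank_inf_eq, hdisj.eq_bot, finrank_bot, add_zero]
  exact Submodule.finrank_mono (sup_le le_sup_left hle)

end Projections

section EckartYoung

open Finset in
lemma sum_le_sum_mul_of_threshold {ι : Type*} [Fintype ι] [DecidableEq ι] (S : Finset ι)
    {e t : ι → ℝ} {a : ℝ} (ha : 0 ≤ a) (hS : ∀ i ∈ S, e i ≤ a) (hSc : ∀ i ∉ S, a ≤ e i)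
    (ht : ∀ i, t i ∈ Set.Icc 0 1) (hcard : (#S : ℝ) ≤ ∑ i, t i) :
    ∑ i ∈ S, e i ≤ ∑ i, e i * t i := by
  have hin : ∑ i ∈ S, (e i + a * (t i - 1)) ≤ ∑ i ∈ S, e i * t i :=
    sum_le_sum fun i hi => by nlinarith [hS i hi, (ht i).2]
  have hout : a * ∑ i ∈ Sᶜ, t i ≤ ∑ i ∈ Sᶜ, e i * t i := by
    rw [mul_sum]
    exact sum_le_sum fun i hi => mul_le_mul_of_nonneg_right (hSc i (mem_compl.1 hi)) (ht i).1
  have hin' : ∑ i ∈ S, (e i + a * (t i - 1)) = ∑ i ∈ S, e i + a * (∑ i ∈ S, t i - #S) := by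
    simp [sum_add_distrib, mul_sum, mul_sub, mul_comm]
  rw [← sum_add_sum_compl S fun i => e i * t i]
  rw [← sum_add_sum_compl S t] at hcard
  nlinarith [mul_nonneg ha (sub_nonneg.2 hcard)]

lemma trace_diagonal_mul {n : Type*} [Fintype n] [DecidableEq n] (e : n → ℝ)
    (M : Matrix n n ℝ) :
    trace (diagonal e * M) = ∑ i, e i * M i i := by
  simp [trace, diagonal_mul]

lemma orthProjMatrix_orthogonal_colSpace_mul_self {m l : ℕ} (C : Matrix (Fin m) (Fin l) ℝ) :
    orthProjMatrix (colSpace C)ᗮ * C = 0 := by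
  ext i j
  rw [orthProjMatrix_mul_apply, Submodule.starProjection_orthogonal_apply_eq_zero]
  · rfl
  · exact ⟨EuclideanSpace.single j 1, by ext; simp [toLpLin_apply]⟩

open Finset in
lemma sum_tail_le_sum_mul_of_antitone {m s : ℕ} {e t : Fin m → ℝ} (he : Antitone e)
    (he0 : ∀ i, 0 ≤ e i) (ht : ∀ i, t i ∈ Set.Icc 0 1)
    (hcard : (#({i | s ≤ i.val} : Finset (Fin m)) : ℝ) ≤ ∑ i, t i) :
    ∑ i : Fin m with s ≤ i.val, e i ≤ ∑ i, e i * t i := by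
  by_cases h : s < m
  · refine sum_le_sum_mul_of_threshold _ (he0 ⟨s, h⟩) (fun i hi => he ?_) (fun i hi => he ?_)
      ht hcard
    · exact Fin.le_def.2 (by simpa using hi)
    · simp only [mem_filter, mem_univ, true_and, not_le] at hi
      exact Fin.le_def.2 hi.le
  · refine sum_le_sum_mul_of_threshold _ le_rfl (fun i hi => ?_) (fun i _ => he0 i) ht hcard
    exact absurd (mem_filter.1 hi).2 (by omega)

open Finset in
lemma card_filter_le_finrank_orthogonal_colSpace {m l s : ℕ} {C : Matrix (Fin m) (Fin l) ℝ}
    (hC : C.rank ≤ s) : #({i | s ≤ i.val} : Finset (Fin m)) ≤ finrank ℝ (colSpace C)ᗮ := by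
  have hsplit :
      #({i | s ≤ i.val} : Finset (Fin m)) + #({i | i.val < s} : Finset (Fin m)) = m := by
    simpa [not_le] using card_filter_add_card_filter_not (s := univ) fun i : Fin m => s ≤ i.val
  have hK := (colSpace C).finrank_add_finrank_orthogonal
  rw [finrank_euclideanSpace_fin, finrank_colSpace] at hK
  rw [Fin.card_filter_val_lt] at hsplit
  have := C.rank_le_height
  omega

lemma sum_tail_le_frobNorm_sub_sq {m l : ℕ} (s : ℕ) {D C : Matrix (Fin m) (Fin l) ℝ}
    {e : Fin m → ℝ} (hD : D * Dᵀ = diagonal e) (he : Antitone e) (hC : C.rank ≤ s) :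
    ∑ i : Fin m with s ≤ i.val, e i ≤ frobNorm (D - C) ^ 2 := by
  set R := orthProjMatrix (colSpace C)ᗮ
  have he0 (i : Fin m) : 0 ≤ e i := by
    rw [← diagonal_apply_eq e i, ← hD, mul_apply]
    exact Finset.sum_nonneg fun j _ => mul_self_nonneg _
  have htrace : ∑ i, R i i = finrank ℝ (colSpace C)ᗮ := trace_orthProjMatrix _
  calc _ ≤ ∑ i, e i * R i i :=
        sum_tail_le_sum_mul_of_antitone he he0 (orthProjMatrix_apply_self_mem_Icc _)
          (by rw [htrace]; exact_mod_cast card_filter_le_finrank_orthogonal_colSpace hC)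
    _ = frobNorm (R * D) ^ 2 := by
        rw [frobNorm_sq_orthProjMatrix_mul, hD, trace_mul_comm, trace_diagonal_mul]
    _ = frobNorm (R * (D - C)) ^ 2 := by
        rw [Matrix.mul_sub, orthProjMatrix_orthogonal_colSpace_mul_self, sub_zero]
    _ ≤ frobNorm (D - C) ^ 2 :=
        pow_le_pow_left₀ (frobNorm_nonneg _) (frobNorm_orthProjMatrix_mul_le _ _) 2

end EckartYoung

section RectangularDiagonal

variable {m l : ℕ} (D : Matrix (Fin m) (Fin l) ℝ)

def IsRectangularDiagonal : Prop :=
  ∀ (i : Fin m) (j : Fin l), (i : ℕ) ≠ (j : ℕ) → D i j = 0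

variable {D}

lemma IsRectangularDiagonal.mul_transpose_eq_diagonal (hD : IsRectangularDiagonal D) :
    D * Dᵀ = diagonal fun i => ∑ j, D i j ^ 2 := by
  ext i i'
  by_cases h : i = i'
  · subst h
    simp [mul_apply, sq]
  · rw [diagonal_apply_ne _ h, mul_apply]
    refine Finset.sum_eq_zero fun j _ => ?_
    by_cases hij : (i : ℕ) = j
    · rw [transpose_apply, hD i' j fun h' => h (Fin.ext (hij.trans h'.symm)), mul_zero]
    · rw [hD i j hij, zero_mul]

lemma IsRectangularDiagonal.sum_sq_row (hD : IsRectangularDiagonal D) (i : Fin m)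
    (hi : (i : ℕ) < l) : ∑ j, D i j ^ 2 = D i ⟨i.val, hi⟩ ^ 2 :=
  Finset.sum_eq_single _ (fun j _ hj => by
    rw [hD i j fun h => hj (Fin.ext h.symm), sq, zero_mul]) (by simp)

lemma IsRectangularDiagonal.antitone_sum_sq_row (hD : IsRectangularDiagonal D)
    (hDnonneg : ∀ i j, 0 ≤ D i j)
    (hDmono : ∀ (i i' : Fin m) (j j' : Fin l),
      (i : ℕ) = (j : ℕ) → (i' : ℕ) = (j' : ℕ) → (i : ℕ) ≤ (i' : ℕ) → D i' j' ≤ D i j) :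
    Antitone fun i => ∑ j, D i j ^ 2 := by
  intro i i' hii'
  by_cases hi' : (i' : ℕ) < l
  · have hi : (i : ℕ) < l := lt_of_le_of_lt hii' hi'
    simp only [hD.sum_sq_row _ hi, hD.sum_sq_row _ hi']
    exact pow_le_pow_left₀ (hDnonneg _ _) (hDmono i i' _ _ rfl rfl hii') 2
  · have hzero : ∑ j, D i' j ^ 2 = 0 :=
      Finset.sum_eq_zero fun j _ => by rw [hD i' j (by omega), sq, zero_mul]
    simp only [hzero]
    positivity

variable (D)

/-- For diagonal `D`, `P * truncateRows D s * Qᵀ` is the hard thresholding `H_s (P * D * Qᵀ)`. -/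
def truncateRows (s : ℕ) : Matrix (Fin m) (Fin l) ℝ :=
  Matrix.of fun i j => if (i : ℕ) < s then D i j else 0

lemma rank_truncateRows_le (s : ℕ) : (truncateRows D s).rank ≤ s := by
  refine (rank_le_card_of_support_subset _ ({i | i.val < s} : Finset (Fin m))
    fun i hi => ?_).trans ?_
  · by_contra h
    exact hi (funext fun j => by simp_all [truncateRows])
  · rw [Fin.card_filter_val_lt]
    exact min_le_right _ _

lemma frobNorm_sub_truncateRows_sq (s : ℕ) :
    frobNorm (D - truncateRows D s) ^ 2 = ∑ i : Fin m with s ≤ i.val, ∑ j, D i j ^ 2 := by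
  rw [frobNorm_sq, Finset.sum_filter]
  refine Finset.sum_congr rfl fun i _ => ?_
  by_cases h : s ≤ (i : ℕ)
  · simp [truncateRows, h, not_lt.2 h]
  · simp [truncateRows, h, not_le.1 h]

end RectangularDiagonal

/-- Theorem 1 (Golub–Hoffman–Stewart). Let `A = (A₁ A₂)` with `rank A₁ = k ≤ r`, and let
`P⊥_{A₁}(A₂) = P D Qᵀ` be an SVD of the projected residual. Then
`B̃₂ := P_{A₁}(A₂) + H_{r−k}(P⊥_{A₁}(A₂))` gives a feasible block matrix `(A₁ B̃₂)` of rank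
at most `r`, and it is optimal among all `B₂` with `rank (A₁ B₂) ≤ r`. -/
theorem golub_hoffman_stewart
    (m k l r : ℕ) (hkr : k ≤ r)
    (A₁ : Matrix (Fin m) (Fin k) ℝ) (A₂ : Matrix (Fin m) (Fin l) ℝ)
    (hA₁ : A₁.rank = k)
    (P : Matrix (Fin m) (Fin m) ℝ) (Q : Matrix (Fin l) (Fin l) ℝ)
    (D : Matrix (Fin m) (Fin l) ℝ)
    (hP : P ∈ Matrix.orthogonalGroup (Fin m) ℝ)
    (hQ : Q ∈ Matrix.orthogonalGroup (Fin l) ℝ)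
    (hDdiag : ∀ (i : Fin m) (j : Fin l), (i : ℕ) ≠ (j : ℕ) → D i j = 0)
    (hDnonneg : ∀ (i : Fin m) (j : Fin l), 0 ≤ D i j)
    (hDmono : ∀ (i i' : Fin m) (j j' : Fin l),
      (i : ℕ) = (j : ℕ) → (i' : ℕ) = (j' : ℕ) → (i : ℕ) ≤ (i' : ℕ) → D i' j' ≤ D i j)
    (hSVD : projOrthCols A₁ A₂ = P * D * Qᵀ)
    (B₂tilde : Matrix (Fin m) (Fin l) ℝ)
    (hB₂tilde : B₂tilde = projCols A₁ A₂ +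
      P * (Matrix.of fun (i : Fin m) (j : Fin l) => if (i : ℕ) < r - k then D i j else 0) * Qᵀ) :
    (Matrix.fromCols A₁ B₂tilde).rank ≤ r ∧
    ∀ B₂ : Matrix (Fin m) (Fin l) ℝ, (Matrix.fromCols A₁ B₂).rank ≤ r →
      frobNorm (A₂ - B₂tilde) ≤ frobNorm (A₂ - B₂) := by
  change B₂tilde = projCols A₁ A₂ + P * truncateRows D (r - k) * Qᵀ at hB₂tilde
  refine ⟨?_, fun B₂ hB₂ => ?_⟩
  · have hsplit := hB₂tilde ▸ rank_fromCols_projCols_add_le A₁ A₂ (P * truncateRows D (r - k) * Qᵀ)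
    have hH := (rank_mul_mul_le P (truncateRows D (r - k)) Qᵀ).trans (rank_truncateRows_le D _)
    omega
  set C := Pᵀ * projOrthCols A₁ B₂ * Q
  have hC : C.rank ≤ r - k := by
    have hsplit := rank_add_rank_projOrthCols_le A₁ B₂
    have hCle : C.rank ≤ (projOrthCols A₁ B₂).rank := rank_mul_mul_le _ _ _
    omega
  have hopt : A₂ - B₂tilde = P * (D - truncateRows D (r - k)) * Qᵀ := by
    rw [hB₂tilde, Matrix.mul_sub, Matrix.sub_mul, ← hSVD, ← sub_sub, sub_projCols]
  have hres : projOrthCols A₁ (A₂ - B₂) = P * (D - C) * Qᵀ := by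
    rw [Matrix.mul_sub, Matrix.sub_mul, projOrthCols_sub, hSVD,
      orthogonal_mul_mul_transpose_cancel hP hQ]
  rw [← pow_le_pow_iff_left₀ (frobNorm_nonneg _) (frobNorm_nonneg _) two_ne_zero, hopt,
    frobNorm_orthogonal_mul_mul_transpose hP hQ, frobNorm_sub_truncateRows_sq]
  calc _ ≤ frobNorm (D - C) ^ 2 := sum_tail_le_frobNorm_sub_sq _
        (IsRectangularDiagonal.mul_transpose_eq_diagonal hDdiag)
        (IsRectangularDiagonal.antitone_sum_sq_row hDdiag hDnonneg hDmono) hC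
    _ = frobNorm (projOrthCols A₁ (A₂ - B₂)) ^ 2 := by
        rw [hres, frobNorm_orthogonal_mul_mul_transpose hP hQ]
    _ ≤ frobNorm (A₂ - B₂) ^ 2 :=
        pow_le_pow_left₀ (frobNorm_nonneg _) (frobNorm_projOrthCols_le _ _) 2
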